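/- Suppose ΔA > 0 and ΔB > 0. For every unit vector ψ⊥ ∈ H with ⟪ψ, ψ⊥⟫ = 0 and each sign s ∈ {+1, −1}, the amended Robertson uncertainty relation holds: ΔA·ΔB·(1 − (1/2)|⟪ψ, (A/ΔA + s·i·B/ΔB) ψ⊥⟫|²) ≥ s·(i/2)⟨[A,B]⟩. -/

import Mathlib

/-!
Write `u = Ăψ` and `v = B̆ψ` for the deviation operators `Ă = A - ⟨A⟩`, `B̆ = B - ⟨B⟩`. Then
`‖u‖ = ΔA`, `‖v‖ = ΔB`, and since `[Ă, B̆] = [A, B]`, `i⟨[A,B]⟩ = -2 Im ⟪u, v⟫`. For `φ ⊥ ψ` the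
inner product `⟪ψ, (A/ΔA + s i B/ΔB) φ⟫` equals `⟪g, φ⟫` with `g = u/ΔA - s i v/ΔB`, and
`‖g‖² = 2 + 2 s Im ⟪u, v⟫ / (ΔA ΔB)`; the theorem is Cauchy–Schwarz `|⟪g, φ⟫| ≤ ‖g‖`.
-/

open scoped ComplexInnerProductSpace BigOperators

noncomputable section

variable {H : Type*} [NormedAddCommGroup H] [InnerProductSpace ℂ H]

/-- Expectation value ⟨A⟩ = Re ⟪ψ, A ψ⟫ of an operator in the state ψ. -/
def expVal (ψ : H) (A : H →ₗ[ℂ] H) : ℝ := (⟪ψ, A ψ⟫).re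

/-- Variance ΔA² = ⟨A²⟩ − ⟨A⟩². -/
def varOf (ψ : H) (A : H →ₗ[ℂ] H) : ℝ := (⟪ψ, A (A ψ)⟫).re - (expVal ψ A) ^ 2

/-- Standard deviation ΔA = √(ΔA²). -/
def stdDev (ψ : H) (A : H →ₗ[ℂ] H) : ℝ := Real.sqrt (varOf ψ A)

/-- The real number i⟨[A,B]⟩. -/
def commRe (ψ : H) (A B : H →ₗ[ℂ] H) : ℝ :=
  (Complex.I * ⟪ψ, (A ∘ₗ B - B ∘ₗ A) ψ⟫).re

/-- The projection Π = I − |ψ⟩⟨ψ|. -/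
def projPerp (ψ : H) : H →ₗ[ℂ] H :=
  LinearMap.id - ((innerSL ℂ ψ).smulRight ψ).toLinearMap

/-- The deviation operator Ă = A − ⟨A⟩I. -/
def devOp (ψ : H) (A : H →ₗ[ℂ] H) : H →ₗ[ℂ] H :=
  A - (expVal ψ A : ℂ) • LinearMap.id

/-- The operator C = −i[A,B]. -/
def opC (A B : H →ₗ[ℂ] H) : H →ₗ[ℂ] H := (-Complex.I) • (A ∘ₗ B - B ∘ₗ A)

/-- The operator F = ĂB̆ + B̆Ă. -/
def opF (ψ : H) (A B : H →ₗ[ℂ] H) : H →ₗ[ℂ] H :=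
  devOp ψ A ∘ₗ devOp ψ B + devOp ψ B ∘ₗ devOp ψ A

open Complex

section Deviation

variable {A B : H →ₗ[ℂ] H} {ψ : H}

lemma devOp_apply (ψ : H) (A : H →ₗ[ℂ] H) (x : H) :
    devOp ψ A x = A x - (expVal ψ A : ℂ) • x := rfl

lemma inner_apply_self_eq_expVal (hA : A.IsSymmetric) : ⟪ψ, A ψ⟫ = expVal ψ A :=
  (hA.coe_re_inner_self_apply ψ).symm

lemma isSymmetric_devOp (hA : A.IsSymmetric) : (devOp ψ A).IsSymmetric :=
  hA.sub (LinearMap.IsSymmetric.id.smul (conj_ofReal _))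

lemma devOp_comp_sub_devOp_comp (ψ : H) (A B : H →ₗ[ℂ] H) :
    devOp ψ A ∘ₗ devOp ψ B - devOp ψ B ∘ₗ devOp ψ A = A ∘ₗ B - B ∘ₗ A := by
  ext x
  simp only [LinearMap.sub_apply, LinearMap.comp_apply, devOp_apply, map_sub, map_smul]
  module

lemma norm_devOp_apply_self_sq (hA : A.IsSymmetric) (hψ : ‖ψ‖ = 1) :
    ‖devOp ψ A ψ‖ ^ 2 = varOf ψ A := by
  have hAA : ‖A ψ‖ ^ 2 = (⟪ψ, A (A ψ)⟫).re := by
    rw [← hA, ← inner_self_eq_norm_sq (𝕜 := ℂ)]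
    rfl
  rw [devOp_apply, norm_sub_sq (𝕜 := ℂ), hAA, inner_smul_right, hA, inner_apply_self_eq_expVal hA,
    norm_smul, hψ, varOf]
  simp only [← ofReal_mul, RCLike.re_to_complex, ofReal_re, norm_real,
    Real.norm_eq_abs]
  rw [mul_one, sq_abs]
  ring

lemma norm_devOp_apply_self (hA : A.IsSymmetric) (hψ : ‖ψ‖ = 1) :
    ‖devOp ψ A ψ‖ = stdDev ψ A := by
  rw [stdDev, ← norm_devOp_apply_self_sq hA hψ, Real.sqrt_sq (norm_nonneg _)]

lemma inner_apply_of_inner_eq_zero (hA : A.IsSymmetric) {φ : H} (hφ : ⟪ψ, φ⟫ = 0) :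
    ⟪ψ, A φ⟫ = ⟪devOp ψ A ψ, φ⟫ := by
  rw [devOp_apply, inner_sub_left, inner_smul_left, hφ, mul_zero, sub_zero, hA]

lemma commRe_eq_neg_two_mul_im_inner (hA : A.IsSymmetric) (hB : B.IsSymmetric) :
    commRe ψ A B = -2 * (⟪A ψ, B ψ⟫).im := by
  have h : ⟪ψ, (A ∘ₗ B - B ∘ₗ A) ψ⟫ = ⟪A ψ, B ψ⟫ - starRingEnd ℂ ⟪A ψ, B ψ⟫ := by
    rw [LinearMap.sub_apply, inner_sub_right, LinearMap.comp_apply, LinearMap.comp_apply, ← hA,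
      ← hB, inner_conj_symm]
  rw [commRe, h, sub_conj]
  simp

lemma commRe_devOp (ψ : H) (A B : H →ₗ[ℂ] H) :
    commRe ψ (devOp ψ A) (devOp ψ B) = commRe ψ A B := by
  rw [commRe, commRe, devOp_comp_sub_devOp_comp]

end Deviation

lemma norm_sub_real_mul_I_smul_sq {E : Type*} [NormedAddCommGroup E] [InnerProductSpace ℂ E]
    (x y : E) (s : ℝ) :
    ‖x - ((s : ℂ) * I) • y‖ ^ 2 = ‖x‖ ^ 2 + 2 * s * (⟪x, y⟫).im + s ^ 2 * ‖y‖ ^ 2 := by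
  rw [norm_sub_sq (𝕜 := ℂ), inner_smul_right, norm_smul]
  simp [mul_pow]
  ring

lemma amended_cauchy_schwarz {E : Type*} [NormedAddCommGroup E] [InnerProductSpace ℂ E]
    {u v φ : E} (hu : u ≠ 0) (hv : v ≠ 0) (hφ : ‖φ‖ ≤ 1) {s : ℝ} (hs : s ^ 2 = 1) :
    -s * (⟪u, v⟫).im ≤
      ‖u‖ * ‖v‖ * (1 - 1 / 2 * ‖⟪(‖u‖ : ℂ)⁻¹ • u - ((s : ℂ) * I * (‖v‖ : ℂ)⁻¹) • v, φ⟫‖ ^ 2) := by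
  set g := (‖u‖ : ℂ)⁻¹ • u - ((s : ℂ) * I * (‖v‖ : ℂ)⁻¹) • v
  have hu1 : ‖(‖u‖ : ℂ)⁻¹ • u‖ = 1 := norm_smul_inv_norm hu
  have hv1 : ‖(‖v‖ : ℂ)⁻¹ • v‖ = 1 := norm_smul_inv_norm hv
  have hg : ‖g‖ ^ 2 = 2 + 2 * s * (⟪u, v⟫).im / (‖u‖ * ‖v‖) := by
    rw [show g = (‖u‖ : ℂ)⁻¹ • u - ((s : ℂ) * I) • (‖v‖ : ℂ)⁻¹ • v by simp only [g, smul_smul],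
      norm_sub_real_mul_I_smul_sq, hu1, hv1, hs, inner_smul_left, inner_smul_right]
    simp only [← ofReal_inv, conj_ofReal, im_ofReal_mul]
    field_simp
    ring
  have hCS : ‖⟪g, φ⟫‖ ≤ ‖g‖ :=
    (norm_inner_le_norm g φ).trans (mul_le_of_le_one_right (norm_nonneg g) hφ)
  calc -s * (⟪u, v⟫).im = ‖u‖ * ‖v‖ * (1 - 1 / 2 * ‖g‖ ^ 2) := by
        rw [hg]
        field_simp
        ring
    _ ≤ ‖u‖ * ‖v‖ * (1 - 1 / 2 * ‖⟪g, φ⟫‖ ^ 2) := by gcongr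

theorem amended_robertson_uncertainty_general
    {H : Type*} [NormedAddCommGroup H] [InnerProductSpace ℂ H]
    (A B : H →ₗ[ℂ] H) (hA : A.IsSymmetric) (hB : B.IsSymmetric)
    (ψ : H) (hψ : ‖ψ‖ = 1)
    (hΔA : 0 < stdDev ψ A) (hΔB : 0 < stdDev ψ B)
    (ψperp : H) (hperpunit : ‖ψperp‖ = 1) (hperp : ⟪ψ, ψperp⟫ = 0)
    (s : ℝ) (hs : s = 1 ∨ s = -1) :
    stdDev ψ A * stdDev ψ B *
        (1 - (1 / 2) * ‖⟪ψ, (((stdDev ψ A : ℂ))⁻¹ • A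
            + ((s : ℂ) * Complex.I * ((stdDev ψ B : ℂ))⁻¹) • B) ψperp⟫‖ ^ 2)
      ≥ s * (commRe ψ A B / 2) := by
  have hs2 : s ^ 2 = 1 := by rcases hs with rfl | rfl <;> norm_num
  have hu := norm_devOp_apply_self hA hψ
  have hv := norm_devOp_apply_self hB hψ
  have key := amended_cauchy_schwarz (norm_pos_iff.mp (hu ▸ hΔA)) (norm_pos_iff.mp (hv ▸ hΔB))
    hperpunit.le hs2
  rw [hu, hv] at key
  have hT : ⟪ψ, ((stdDev ψ A : ℂ)⁻¹ • A + ((s : ℂ) * I * (stdDev ψ B : ℂ)⁻¹) • B) ψperp⟫ =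
      ⟪(stdDev ψ A : ℂ)⁻¹ • devOp ψ A ψ - ((s : ℂ) * I * (stdDev ψ B : ℂ)⁻¹) • devOp ψ B ψ,
        ψperp⟫ := by
    simp [inner_apply_of_inner_eq_zero hA hperp, inner_apply_of_inner_eq_zero hB hperp]
    ring
  rw [hT, ← commRe_devOp, commRe_eq_neg_two_mul_im_inner (isSymmetric_devOp hA)
    (isSymmetric_devOp hB)]
  linarith

theorem amended_robertson_uncertainty
    {H : Type*} [NormedAddCommGroup H] [InnerProductSpace ℂ H] [FiniteDimensional ℂ H]
    (A B : H →ₗ[ℂ] H) (hA : A.IsSymmetric) (hB : B.IsSymmetric)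
    (ψ : H) (hψ : ‖ψ‖ = 1)
    (hΔA : 0 < stdDev ψ A) (hΔB : 0 < stdDev ψ B)
    (ψperp : H) (hperpunit : ‖ψperp‖ = 1) (hperp : ⟪ψ, ψperp⟫ = 0)
    (s : ℝ) (hs : s = 1 ∨ s = -1) :
    stdDev ψ A * stdDev ψ B *
        (1 - (1 / 2) * ‖⟪ψ, (((stdDev ψ A : ℂ))⁻¹ • A
            + ((s : ℂ) * Complex.I * ((stdDev ψ B : ℂ))⁻¹) • B) ψperp⟫‖ ^ 2)
      ≥ s * (commRe ψ A B / 2) :=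
  amended_robertson_uncertainty_general A B hA hB ψ hψ hΔA hΔB ψperp hperpunit hperp s hs
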